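/- For infinite cardinals κ ≤ λ, there exists a pre-Hilbert space of dimension κ and density λ if and only if λ ≤ κ^ℵ0. -/

import Mathlib

noncomputable section
open scoped InnerProductSpace ENNReal

/-- An orthonormal subset of an inner product space. -/
def OrthSet (k : Type*) {E : Type*} [RCLike k] [NormedAddCommGroup E]
    [InnerProductSpace k E] (B : Set E) : Prop :=
  Orthonormal k ((↑) : B → E)

/-- A maximal orthonormal system of the whole space. -/
def MaximalOrthSet (k : Type*) {E : Type*} [RCLike k] [NormedAddCommGroup E]
    [InnerProductSpace k E] (B : Set E) : Prop :=
  OrthSet k B ∧ ∀ C : Set E, B ⊆ C → OrthSet k C → C = B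

/-- An orthonormal basis (as a set): an orthonormal system whose linear span is dense. -/
def IsOrthBasisSet (k : Type*) {E : Type*} [RCLike k] [NormedAddCommGroup E]
    [InnerProductSpace k E] (B : Set E) : Prop :=
  OrthSet k B ∧ Dense (Submodule.span k B : Set E)

/-- The space has an orthonormal basis (is non-pathological). -/
def HasOrthBasis (k E : Type*) [RCLike k] [NormedAddCommGroup E]
    [InnerProductSpace k E] : Prop :=
  ∃ B : Set E, IsOrthBasisSet k B

/-- Density: least cardinality of a dense subset. -/
def densityCard (E : Type*) [TopologicalSpace E] : Cardinal :=
  sInf { c | ∃ D : Set E, Dense D ∧ Cardinal.mk D = c }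

/-!
Along a maximal orthonormal set `B` of a pre-Hilbert space `E`, every vector has countably many
nonzero Fourier coefficients (Bessel), and a vector orthogonal to all of `B` vanishes. Hence
`|E| ≤ (|B| · 𝔠)^ℵ₀ = |B|^ℵ₀`, which bounds the density.

Conversely, for `κ ≤ λ ≤ κ^ℵ₀` embed a set `F` of size `λ` into `ℕ → A` with `|A| = κ`, making each
`f ∈ F` a branch of the tree `List A`. In `ℓ²(List A ⊕ F)` let `X` be the span of the basis vectors
`e_t` of the nodes and of `u_f = e_f + ∑ₙ 2^{-(n+1)} e_{f|n}`. Far out along its branch `u_f` is the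
only generator with a nonzero coordinate, so no nonzero vector of `X` is orthogonal to every `e_t`:
by Bessel each orthonormal set of `X` has at most `κ` elements, while a maximal one has at least as
many as the orthonormal family `(e_t)`. The `u_f` are `1`-separated and `X` is spanned by `λ`
vectors, so the density of `X` is `λ`.
-/

universe u

open Cardinal Set Function Filter

section Density

variable {X : Type*} [TopologicalSpace X]

lemma densityCard_le_of_dense {D : Set X} (hD : Dense D) : densityCard X ≤ #D :=
  csInf_le' ⟨D, hD, rfl⟩

lemma densityCard_le_mk : densityCard X ≤ #X :=
  (densityCard_le_of_dense dense_univ).trans_eq mk_univ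

lemma le_densityCard {c : Cardinal} (h : ∀ D : Set X, Dense D → c ≤ #D) :
    c ≤ densityCard X :=
  le_csInf ⟨_, univ, dense_univ, rfl⟩ fun _ ⟨D, hD, hc⟩ => hc ▸ h D hD

end Density

lemma mk_le_of_dense_of_separated {X ι : Type u} [PseudoMetricSpace X] {x : ι → X} {ε : ℝ}
    (hε : 0 < ε) (hx : Pairwise fun i j => ε ≤ dist (x i) (x j)) {D : Set X} (hD : Dense D) :
    #ι ≤ #D := by
  choose y hyD hy using fun i => hD.exists_dist_lt (x i) (half_pos hε)
  refine ⟨⟨fun i => ⟨y i, hyD i⟩, fun i j hij => ?_⟩⟩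
  by_contra hne
  have hyij : y i = y j := congrArg Subtype.val hij
  have hyi := hy i
  rw [hyij] at hyi
  linarith [hx hne, dist_triangle_right (x i) (x j) (y j), hy j]

lemma exists_dense_mk_le_of_dense_span {R M : Type u} [Semiring R] [TopologicalSpace R]
    [TopologicalSpace.SeparableSpace R] [AddCommMonoid M] [Module R M] [TopologicalSpace M]
    [ContinuousAdd M] [ContinuousSMul R M] {s : Set M}
    (hs : Dense (Submodule.span R s : Set M)) :
    ∃ D : Set M, Dense D ∧ #D ≤ max ℵ₀ #s := by
  obtain ⟨Q, hQc, hQd⟩ := TopologicalSpace.exists_countable_dense R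
  have := hQc.to_subtype
  let comb : List (Q × s) → M := fun l => (l.map fun p => (p.1 : R) • (p.2 : M)).sum
  refine ⟨range comb, dense_closure.1 (hs.mono fun m hm => ?_), mk_range_le.trans ?_⟩
  · obtain ⟨n, a, v, rfl⟩ := Submodule.mem_span_set'.1 hm
    have hcont : Continuous fun a : Fin n → R => ∑ i, a i • (v i : M) :=
      continuous_finsetSum _ fun i _ => (continuous_apply i).smul continuous_const
    refine image_closure_subset_closure_image hcont
      ⟨a, (dense_pi univ fun _ _ => hQd).closure_eq ▸ mem_univ a, rfl⟩ |> closure_mono ?_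
    rintro _ ⟨b, hb, rfl⟩
    refine ⟨List.ofFn fun i => (⟨b i, hb i (mem_univ i)⟩, v i), ?_⟩
    simp [comb, List.sum_ofFn]
  · calc #(List (Q × s)) ≤ max ℵ₀ #(Q × s) := mk_list_le_max _
      _ ≤ max ℵ₀ #s := by
        rw [mk_prod, lift_id, lift_id]
        exact max_le (le_max_left _ _) <| (mul_le_max _ _).trans <| max_le
          (max_le (mk_le_aleph0.trans (le_max_left _ _)) (le_max_right _ _)) (le_max_left _ _)

lemma mk_le_of_injective_of_countable_support {γ α β : Type u} [Zero β] [Nonempty α]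
    {f : γ → α → β} (hf : Injective f) (hc : ∀ x, (support (f x)).Countable) :
    #γ ≤ #α ^ ℵ₀ * #β ^ ℵ₀ := by
  obtain ⟨a₀⟩ := ‹Nonempty α›
  choose g hg using fun x => ((hc x).insert a₀).exists_eq_range (insert_nonempty _ _)
  have hinj : Injective fun x => (g x, f x ∘ g x) := by
    intro x y hxy
    obtain ⟨hgxy, hfxy⟩ : g x = g y ∧ f x ∘ g x = f y ∘ g y := Prod.ext_iff.1 hxy
    refine hf (funext fun a => ?_)
    by_cases ha : a ∈ range (g x)
    · obtain ⟨n, rfl⟩ := ha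
      exact (congrFun hfxy n).trans (by rw [hgxy]; rfl)
    · have hy : a ∉ range (g y) := hgxy ▸ ha
      rw [← hg] at ha hy
      rw [notMem_support.1 fun h => ha (mem_insert_of_mem _ h),
        notMem_support.1 fun h => hy (mem_insert_of_mem _ h)]
  calc #γ ≤ #((ℕ → α) × (ℕ → β)) := mk_le_of_injective hinj
    _ = #α ^ ℵ₀ * #β ^ ℵ₀ := by simp

lemma RCLike.mk_le_continuum (k : Type u) [RCLike k] : #k ≤ 𝔠 := by
  have hinj : Injective fun z : k => (RCLike.re z, RCLike.im z) := fun z w h => by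
    simp only [Prod.mk.injEq] at h
    exact RCLike.ext h.1 h.2
  simpa [mk_real] using lift_mk_le_lift_mk_of_injective hinj

section OrthonormalSets

variable {k : Type*} [RCLike k] {E : Type u} [NormedAddCommGroup E] [InnerProductSpace k E]

lemma Orthonormal.countable_inner_ne_zero {ι : Type*} {v : ι → E} (hv : Orthonormal k v)
    (x : E) : {i | ⟪v i, x⟫_k ≠ 0}.Countable := by
  simpa [support] using (hv.inner_products_summable (x := x)).countable_support

lemma exists_maximalOrthSet : ∃ B : Set E, MaximalOrthSet k B := by
  obtain ⟨B, -, hB, hmax⟩ := exists_maximal_orthonormal (𝕜 := k) (orthonormal_empty k E)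
  exact ⟨B, hB, hmax⟩

lemma MaximalOrthSet.eq_zero_of_forall_inner_eq_zero {B : Set E} (hB : MaximalOrthSet k B)
    {x : E} (hx : ∀ b ∈ B, ⟪b, x⟫_k = 0) : x = 0 := by
  have hbot := (maximal_orthonormal_iff_orthogonalComplement_eq_bot hB.1).1 hB.2
  refine (Submodule.eq_bot_iff _).1 hbot x fun u hu => ?_
  induction hu using Submodule.span_induction with
  | mem b hb => exact hx b hb
  | zero => exact inner_zero_left x
  | add u w _ _ hu hw => rw [inner_add_left, hu, hw, add_zero]
  | smul a u _ hu => rw [inner_smul_left, hu, mul_zero]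

lemma OrthSet.mk_le_mul_aleph0 {C : Set E} (hC : OrthSet k C) {ι : Type u} (g : ι → E)
    (hg : ∀ c ∈ C, ∃ i, ⟪c, g i⟫_k ≠ 0) : #C ≤ #ι * ℵ₀ := by
  have hcover : (univ : Set C) ⊆ ⋃ i, {c : C | ⟪(c : E), g i⟫_k ≠ 0} := fun c _ =>
    mem_iUnion.2 (hg c c.2)
  calc #C = #(univ : Set C) := mk_univ.symm
    _ ≤ #ι * ⨆ i, #{c : C | ⟪(c : E), g i⟫_k ≠ 0} :=
        (mk_le_mk_of_subset hcover).trans (mk_iUnion_le _)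
    _ ≤ #ι * ℵ₀ :=
        mul_le_mul_right (ciSup_le' fun i => (hC.countable_inner_ne_zero (g i)).le_aleph0) _

lemma MaximalOrthSet.mk_le_of_orthonormal {B : Set E} (hB : MaximalOrthSet k B) {ι : Type u}
    {v : ι → E} (hv : Orthonormal k v) : #ι ≤ #B := by
  have hbot := (maximal_orthonormal_iff_orthogonalComplement_eq_bot hB.1).1 hB.2
  rcases B.finite_or_infinite with hfin | hinf
  · have : FiniteDimensional k (Submodule.span k B) := FiniteDimensional.span_of_finite k hfin
    have htop : Submodule.span k B = ⊤ := Submodule.orthogonal_eq_bot_iff.1 hbot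
    calc #ι ≤ Module.rank k E := hv.linearIndependent.cardinal_le_rank
      _ = Module.rank k (Submodule.span k B) := by rw [htop, rank_top]
      _ ≤ #B := rank_span_le B
  · have := hinf.to_subtype
    by_contra! hlt
    -- each `b` sees only countably many `v i`, so some `v i` is orthogonal to all of `B`
    have hsmall : #(⋃ b : B, {i | ⟪v i, (b : E)⟫_k ≠ 0}) < #(univ : Set ι) := by
      calc #(⋃ b : B, {i | ⟪v i, (b : E)⟫_k ≠ 0})
          ≤ #B * ⨆ b : B, #{i | ⟪v i, (b : E)⟫_k ≠ 0} := mk_iUnion_le _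
        _ ≤ #B * ℵ₀ := mul_le_mul_right
            (ciSup_le' fun b : B => (hv.countable_inner_ne_zero (b : E)).le_aleph0) _
        _ = #B := mul_aleph0_eq (aleph0_le_mk B)
        _ < #(univ : Set ι) := mk_univ.symm ▸ hlt
    obtain ⟨i, -, hi⟩ := not_subset.1 fun h => (mk_le_mk_of_subset h).not_gt hsmall
    simp only [mem_iUnion, mem_ofPred_eq, not_exists, not_not] at hi
    exact hv.ne_zero i <|
      hB.eq_zero_of_forall_inner_eq_zero fun b hb => inner_eq_zero_symm.1 (hi ⟨b, hb⟩)

end OrthonormalSets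

lemma MaximalOrthSet.mk_le_power_aleph0 {k E : Type u} [RCLike k] [NormedAddCommGroup E]
    [InnerProductSpace k E] {B : Set E} (hB : MaximalOrthSet k B) (hB₀ : ℵ₀ ≤ #B) :
    #E ≤ #B ^ ℵ₀ := by
  have hinj : Injective fun x : E => fun b : B => ⟪(b : E), x⟫_k := fun x y h =>
    sub_eq_zero.1 <| hB.eq_zero_of_forall_inner_eq_zero fun b hb => by
      rw [inner_sub_right, sub_eq_zero]; exact congrFun h ⟨b, hb⟩
  have := infinite_iff.2 hB₀
  have hk : #k ^ ℵ₀ ≤ #B ^ ℵ₀ :=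
    calc #k ^ ℵ₀ ≤ 𝔠 ^ ℵ₀ := power_le_power_right (RCLike.mk_le_continuum k)
      _ = 2 ^ ℵ₀ := by rw [continuum_power_aleph0, two_power_aleph0]
      _ ≤ #B ^ ℵ₀ := power_le_power_right ((natCast_lt_aleph0 (n := 2)).le.trans hB₀)
  calc #E ≤ #B ^ ℵ₀ * #k ^ ℵ₀ :=
        mk_le_of_injective_of_countable_support hinj hB.1.countable_inner_ne_zero
    _ ≤ #B ^ ℵ₀ * #B ^ ℵ₀ := mul_le_mul_right hk _
    _ = #B ^ ℵ₀ := mul_eq_self (hB₀.trans (self_le_power _ one_le_aleph0))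

section Halmos

open scoped Classical

variable {k A F : Type u} [RCLike k] (em : F ↪ (ℕ → A))

abbrev TreeL2 (k A F : Type u) [RCLike k] := lp (fun _ : List A ⊕ F => k) 2

def treeBranch (f : F) (n : ℕ) : List A := List.ofFn fun i : Fin n => em f i

@[simp] lemma length_treeBranch (f : F) (n : ℕ) : (treeBranch em f n).length = n :=
  List.length_ofFn

lemma treeBranch_injective (f : F) : Injective (treeBranch em f) := fun m n h => by
  simpa using congrArg List.length h

lemma eventually_treeBranch_ne {f g : F} (hfg : f ≠ g) :
    ∀ᶠ n in atTop, treeBranch em f n ≠ treeBranch em g n := by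
  obtain ⟨m, hm⟩ : ∃ m, em f m ≠ em g m := by
    by_contra! h
    exact hfg (em.injective (funext h))
  filter_upwards [eventually_gt_atTop m] with n hn h
  exact hm (by simpa using congrFun (List.ofFn_inj.1 h) ⟨m, hn⟩)

def halmosFun (f : F) : List A ⊕ F → k :=
  Sum.elim (fun t => if t = treeBranch em f t.length then (2⁻¹ : k) ^ (t.length + 1) else 0)
    (Pi.single f 1)

lemma memℓp_halmosFun (f : F) : Memℓp (halmosFun (k := k) em f) 2 := by
  refine memℓp_gen (Summable.sum _ ?_ ?_)
  · refine ((treeBranch_injective em f).summable_iff fun t ht => ?_).1 ?_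
    · have : t ≠ treeBranch em f t.length := fun h => ht ⟨_, h.symm⟩
      simp [halmosFun, this]
    · have := summable_geometric_of_lt_one (r := (4⁻¹ : ℝ)) (by norm_num) (by norm_num)
      refine (this.mul_left 4⁻¹).congr fun n => ?_
      simp only [halmosFun, comp_apply, Sum.elim_inl, length_treeBranch, if_true, norm_pow,
        norm_inv, RCLike.norm_ofNat, ENNReal.toReal_ofNat, Real.rpow_two]
      rw [← pow_mul, show (4 : ℝ)⁻¹ = 2⁻¹ ^ 2 by norm_num, ← pow_mul, ← pow_add]
      ring
  · refine summable_of_hasFiniteSupport ((finite_singleton f).subset fun g hg => ?_)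
    by_contra h
    exact hg (by simp [halmosFun, Pi.single_eq_of_ne (mem_singleton_iff.not.1 h)])

def halmosGen : List A ⊕ F → TreeL2 k A F :=
  Sum.elim (fun t => lp.single 2 (.inl t) 1) fun f => ⟨halmosFun em f, memℓp_halmosFun em f⟩

variable (k) in
def HalmosSpace : Submodule k (TreeL2 k A F) := Submodule.span k (range (halmosGen em))

lemma halmosGen_mem (i : List A ⊕ F) : halmosGen (k := k) em i ∈ HalmosSpace k em :=
  Submodule.subset_span (mem_range_self i)

lemma eventually_halmosGen_apply_treeBranch (f : F) (i : List A ⊕ F) :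
    ∀ᶠ n in atTop, halmosGen (k := k) em i (.inl (treeBranch em f n)) =
      if i = .inr f then (2⁻¹ : k) ^ (n + 1) else 0 := by
  rcases i with t | g
  · filter_upwards [eventually_gt_atTop t.length] with n hn
    have : treeBranch em f n ≠ t := fun h => hn.ne' (h ▸ (length_treeBranch em f n).symm)
    simp [halmosGen, this]
  · rcases eq_or_ne g f with rfl | hgf
    · simp [halmosGen, halmosFun]
    · filter_upwards [eventually_treeBranch_ne em hgf] with n hn
      simp [halmosGen, halmosFun, hgf, Ne.symm hn]

lemma eq_zero_of_mem_halmosSpace {x : TreeL2 k A F} (hx : x ∈ HalmosSpace k em)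
    (h0 : ∀ t, x (.inl t) = 0) : x = 0 := by
  obtain ⟨c, rfl⟩ := Finsupp.mem_span_range_iff_exists_finsupp.1 hx
  have hcoord : ∀ j, (c.sum fun i a => a • halmosGen em i) j =
      ∑ i ∈ c.support, c i * halmosGen em i j := fun j => by
    simp only [Finsupp.sum, lp.coeFn_sum, Finset.sum_apply, lp.coeFn_smul, Pi.smul_apply,
      smul_eq_mul]
  -- far out along the branch of `f`, only the generator `u_f` has a nonzero coordinate
  have hF : ∀ f, c (.inr f) = 0 := fun f => by
    obtain ⟨n, hn⟩ := ((Finset.eventually_all c.support).2 fun i _ =>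
      eventually_halmosGen_apply_treeBranch (k := k) em f i).exists
    have := h0 (treeBranch em f n)
    rw [hcoord, Finset.sum_congr rfl fun i hi => by rw [hn i hi]] at this
    simpa using this
  have hT : ∀ t, c (.inl t) = 0 := fun t => by
    have := h0 t
    rw [hcoord, Finset.sum_eq_single (.inl t)] at this
    · simpa [halmosGen] using this
    · rintro (s | f) - hne
      · simp [halmosGen, hne]
      · simp [hF f]
    · simp +contextual
  have hc : c = 0 := by
    ext (t | f)
    exacts [hT t, hF f]
  simp [hc]

lemma orthonormal_halmosGen_inl :
    Orthonormal k fun t : List A => (⟨_, halmosGen_mem em (.inl t)⟩ : HalmosSpace k em) := by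
  refine (HalmosSpace k em).subtypeₗᵢ.orthonormal_comp_iff.1 <|
    orthonormal_iff_ite.2 fun s t => ?_
  simp [halmosGen, lp.inner_single_left, Pi.single_apply]

lemma OrthSet.mk_le_of_halmosSpace {C : Set (HalmosSpace k em)} (hC : OrthSet k C) :
    #C ≤ #(List A) * ℵ₀ := by
  refine hC.mk_le_mul_aleph0 (fun t => ⟨_, halmosGen_mem em (.inl t)⟩) fun c hc => ?_
  by_contra! h
  refine hC.ne_zero ⟨c, hc⟩ (Subtype.ext (eq_zero_of_mem_halmosSpace em c.2 fun t => ?_))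
  simpa [halmosGen, lp.inner_single_right] using h t

lemma pairwise_one_le_dist_halmosGen_inr :
    Pairwise fun f g : F => 1 ≤ dist (⟨_, halmosGen_mem em (.inr f)⟩ : HalmosSpace k em)
      ⟨_, halmosGen_mem em (.inr g)⟩ := fun f g hfg => by
  dsimp only
  rw [Subtype.dist_eq, dist_eq_norm]
  refine le_of_eq_of_le ?_ (lp.norm_apply_le_norm two_ne_zero _ (.inr f))
  rw [lp.coeFn_sub, Pi.sub_apply]
  simp [halmosGen, halmosFun, Pi.single_eq_of_ne hfg]

lemma densityCard_halmosSpace [Infinite A] (hAF : #A ≤ #F) :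
    densityCard (HalmosSpace k em) = #F := by
  refine le_antisymm ?_ (le_densityCard fun D hD =>
    mk_le_of_dense_of_separated one_pos (pairwise_one_le_dist_halmosGen_inr em) hD)
  let s : Set (HalmosSpace k em) := (↑) ⁻¹' range (halmosGen (k := k) em)
  have hs : Dense (Submodule.span k s : Set (HalmosSpace k em)) := by
    rw [show Submodule.span k s = ⊤ from Submodule.span_span_coe_preimage, Submodule.top_coe]
    exact dense_univ
  obtain ⟨D, hD, hDs⟩ := exists_dense_mk_le_of_dense_span hs
  have hF : ℵ₀ ≤ #F := (aleph0_le_mk A).trans hAF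
  calc densityCard (HalmosSpace k em) ≤ #D := densityCard_le_of_dense hD
    _ ≤ max ℵ₀ #s := hDs
    _ ≤ max ℵ₀ #(List A ⊕ F) := max_le_max le_rfl <|
      (mk_preimage_of_injective _ _ Subtype.val_injective).trans mk_range_le
    _ = #F := by
      rw [mk_sum, lift_id, lift_id, mk_list_eq_mk, add_eq_right hF hAF, max_eq_right hF]

lemma HalmosSpace.mk_eq_of_maximalOrthSet [Infinite A] {B : Set (HalmosSpace k em)}
    (hB : MaximalOrthSet k B) : #B = #A := by
  refine le_antisymm ?_ ?_
  · simpa [mk_list_eq_mk] using hB.1.mk_le_of_halmosSpace em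
  · simpa [mk_list_eq_mk] using hB.mk_le_of_orthonormal (orthonormal_halmosGen_inl em)

end Halmos

theorem exists_dim_density_of_le_power {k : Type u} [RCLike k] {κ μ : Cardinal.{u}}
    (hκ : ℵ₀ ≤ κ) (hκμ : κ ≤ μ) (hμ : μ ≤ κ ^ ℵ₀) :
    ∃ (E : Type u) (_ : NormedAddCommGroup E) (_ : InnerProductSpace k E),
      (∀ B : Set E, MaximalOrthSet k B → #B = κ) ∧ densityCard E = μ := by
  induction κ, μ using Cardinal.inductionOn₂ with | _ A F
  obtain ⟨em⟩ := (Cardinal.le_def F (ℕ → A)).1 (by simpa [mk_arrow] using hμ)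
  have := infinite_iff.2 hκ
  exact ⟨HalmosSpace k em, inferInstance, inferInstance,
    fun B hB => HalmosSpace.mk_eq_of_maximalOrthSet em hB, densityCard_halmosSpace em hκμ⟩

theorem stmt10 (k : Type) [RCLike k] (kap lam : Cardinal)
    (hk : Cardinal.aleph0 ≤ kap) (hkl : kap ≤ lam) :
    (∃ (E : Type) (_ : NormedAddCommGroup E) (_ : InnerProductSpace k E),
      (∀ B : Set E, MaximalOrthSet k B → Cardinal.mk B = kap) ∧
      densityCard E = lam) ↔
    lam ≤ kap ^ Cardinal.aleph0 := by
  refine ⟨?_, exists_dim_density_of_le_power hk hkl⟩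
  rintro ⟨E, _, _, hdim, rfl⟩
  obtain ⟨B, hB⟩ := exists_maximalOrthSet (k := k) (E := E)
  rw [← hdim B hB] at hk ⊢
  exact densityCard_le_mk.trans (hB.mk_le_power_aleph0 hk)
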